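/- arXiv:2410.07939 — 3 statements merged into one kernel-verified Lean document; each statement's English description precedes it below -/
import Mathlib

section
/- Let (U, V) = {(U_n, V_n)} be a sequence of pairs of random variables on finite sets. If there is a sequence {ψ_n} of (deterministic) functions with lim_{n→∞} P(ψ_n(V_n) ≠ U_n) = 0, then the spectral conditional sup-entropy rate satisfies H̄(U|V) = 0. -/
open Filter

open Classical in
/-- Probability of an event under a distribution on a finite type. -/
noncomputable def pr {α : Type*} [Fintype α] (p : α → ℝ) (E : α → Prop) : ℝ :=
  ∑ a, if E a then p a else 0

/-- Limit superior in probability for finite-alphabet sequences. -/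
noncomputable def pLimsup (α : ℕ → Type) [∀ n, Fintype (α n)]
    (p : ∀ n, α n → ℝ) (f : ∀ n, α n → ℝ) : ℝ :=
  sInf {θ : ℝ | Tendsto (fun n => pr (p n) (fun a => θ < f n a)) atTop (nhds 0)}

open Classical in
lemma pr_nonneg {α : Type*} [Fintype α] (p : α → ℝ) (hp : ∀ a, 0 ≤ p a)
    (E : α → Prop) : 0 ≤ pr p E := by
  unfold pr
  apply Finset.sum_nonneg
  intro a _
  split_ifs
  · exact hp a
  · exact le_rfl

open Classical in
lemma pr_le_add {α : Type*} [Fintype α] (p : α → ℝ) (hp : ∀ a, 0 ≤ p a)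
    (E F G : α → Prop) (h : ∀ a, E a → F a ∨ G a) :
    pr p E ≤ pr p F + pr p G := by
  unfold pr
  rw [← Finset.sum_add_distrib]
  apply Finset.sum_le_sum
  intro a _
  by_cases hE : E a
  · rcases h a hE with hF | hG <;> split_ifs <;> simp_all <;> linarith [hp a]
  · split_ifs <;> simp_all <;> linarith [hp a]

/-- Information-spectrum analogue of Fano's inequality: if there are decoders
`ψ n` with `P(ψ n (V_n) ≠ U_n) → 0`, then `H̄(U|V) = 0`. -/
theorem stmt10 (α β : ℕ → Type) [∀ n, Fintype (α n)] [∀ n, Fintype (β n)]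
    (μ : ∀ n, α n × β n → ℝ)
    (h0 : ∀ n x, 0 ≤ μ n x) (h1 : ∀ n, ∑ x, μ n x = 1)
    (ψ : ∀ n, β n → α n)
    (herr : Tendsto (fun n => pr (μ n) (fun x => ψ n x.2 ≠ x.1)) atTop (nhds 0)) :
    pLimsup (fun n => α n × β n) μ
        (fun n x => (1 / (n : ℝ)) * Real.logb 2
          (1 / (μ n x / ∑ a, μ n (a, x.2)))) = 0 := by
  classical
  set f : ∀ n, α n × β n → ℝ := fun n x => (1 / (n : ℝ)) * Real.logb 2
      (1 / (μ n x / ∑ a, μ n (a, x.2))) with hfdef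
  -- nonnegativity of f
  have hSnonneg : ∀ n (v : β n), (0:ℝ) ≤ ∑ a, μ n (a, v) := fun n v =>
    Finset.sum_nonneg fun a _ => h0 n (a, v)
  have hfn : ∀ n x, 0 ≤ f n x := by
    intro n x
    have hc0 : 0 ≤ μ n x / ∑ a, μ n (a, x.2) := div_nonneg (h0 n x) (hSnonneg n x.2)
    rcases hc0.eq_or_lt with h | h
    · have hz : μ n x / ∑ a, μ n (a, x.2) = 0 := h.symm
      show (0:ℝ) ≤ (1 / (n : ℝ)) * Real.logb 2 (1 / (μ n x / ∑ a, μ n (a, x.2)))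
      rw [hz]
      simp
    · have hμpos : 0 < μ n x := by
        by_contra hμ
        push_neg at hμ
        have : μ n x = 0 := le_antisymm hμ (h0 n x)
        simp [this] at h
      have hS : μ n x ≤ ∑ a, μ n (a, x.2) := by
        have := Finset.single_le_sum (f := fun a => μ n (a, x.2))
          (fun a _ => h0 n (a, x.2)) (Finset.mem_univ x.1)
        simpa using this
      have hc1 : μ n x / ∑ a, μ n (a, x.2) ≤ 1 := by
        apply div_le_one_of_le₀ hS (hSnonneg n x.2)
      have h1c : 1 ≤ 1 / (μ n x / ∑ a, μ n (a, x.2)) := one_le_one_div h hc1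
      have := Real.logb_nonneg one_lt_two h1c
      have hn : (0:ℝ) ≤ 1 / (n:ℝ) := by positivity
      exact mul_nonneg hn this
  -- every positive θ is in the set
  have hmem : ∀ θ : ℝ, 0 < θ →
      Tendsto (fun n => pr (μ n) (fun x => θ < f n x)) atTop (nhds 0) := by
    intro θ hθ
    set r : ℝ := (2:ℝ) ^ (-θ) with hrdef
    have hr0 : 0 ≤ r := Real.rpow_nonneg (by norm_num) _
    have hr1 : r < 1 := Real.rpow_lt_one_of_one_lt_of_neg one_lt_two (by linarith)
    -- the key bound
    have hbound : ∀ n, pr (μ n) (fun x => θ < f n x)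
        ≤ pr (μ n) (fun x => ψ n x.2 ≠ x.1) + r ^ n := by
      intro n
      have step1 : pr (μ n) (fun x => θ < f n x)
          ≤ pr (μ n) (fun x => ψ n x.2 ≠ x.1)
            + pr (μ n) (fun x => ψ n x.2 = x.1 ∧ θ < f n x) := by
        apply pr_le_add _ (h0 n)
        intro a hE
        by_cases hc : ψ n a.2 = a.1
        · exact Or.inr ⟨hc, hE⟩
        · exact Or.inl hc
      have step2 : pr (μ n) (fun x => ψ n x.2 = x.1 ∧ θ < f n x) ≤ r ^ n := by
        unfold pr
        simp only [Fintype.sum_prod_type_right]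
        have htot : (∑ v : β n, r ^ n * ∑ a, μ n (a, v)) = r ^ n := by
          rw [← Finset.mul_sum, ← Fintype.sum_prod_type_right, h1 n, mul_one]
        refine le_trans (Finset.sum_le_sum ?_) (le_of_eq htot)
        intro v _
        refine le_trans (le_of_eq (Finset.sum_eq_single (ψ n v) ?_ ?_)) ?_
        · intro b _ hb
          rw [if_neg]
          intro hcon
          exact hb hcon.1.symm
        · intro h; exact absurd (Finset.mem_univ _) h
        split_ifs with hev'
        have hev : θ < f n (ψ n v, v) := hev'.2
        · -- θ < f n (ψ n v, v) implies μ n (ψ n v, v) ≤ r^n * S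
          set x : α n × β n := (ψ n v, v) with hx
          set S : ℝ := ∑ a, μ n (a, v) with hSdef
          by_cases hμ0 : μ n x = 0
          · rw [hμ0]; exact mul_nonneg (pow_nonneg hr0 n) (hSnonneg n v)
          have hμpos : 0 < μ n x := lt_of_le_of_ne (h0 n x) (Ne.symm hμ0)
          have hSx : (∑ a, μ n (a, x.2)) = S := rfl
          have hSpos : 0 < S := by
            have hle : μ n x ≤ S := by
              have := Finset.single_le_sum (f := fun a => μ n (a, v))
                (fun a _ => h0 n (a, v)) (Finset.mem_univ (ψ n v))
              simpa using this
            linarith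
          set c : ℝ := μ n x / S with hcdef
          have hcpos : 0 < c := div_pos hμpos hSpos
          have hn0 : n ≠ 0 := by
            intro hn
            subst hn
            simp [hfdef] at hev
            linarith
          have hnpos : (0:ℝ) < (n:ℝ) := by positivity
          have hev' : θ < (1 / (n:ℝ)) * Real.logb 2 (1 / c) := by
            simpa [hfdef, hSx, hcdef] using hev
          have hL : (n:ℝ) * θ < Real.logb 2 (1 / c) := by
            rw [one_div, ← div_eq_inv_mul, lt_div_iff₀ hnpos] at hev'
            linarith [hev']
          have hlogc : Real.logb 2 c < -((n:ℝ) * θ) := by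
            rw [one_div, Real.logb_inv] at hL
            linarith
          have hcres : c < (2:ℝ) ^ (-((n:ℝ) * θ)) :=
            (Real.logb_lt_iff_lt_rpow one_lt_two hcpos).mp hlogc
          have hrn : (2:ℝ) ^ (-((n:ℝ) * θ)) = r ^ n := by
            rw [hrdef, ← Real.rpow_natCast ((2:ℝ) ^ (-θ)) n,
              ← Real.rpow_mul (by norm_num : (0:ℝ) ≤ 2)]
            ring_nf
          have hμc : μ n x = c * S := by
            rw [hcdef, div_mul_cancel₀ _ (ne_of_gt hSpos)]
          rw [hμc]
          calc c * S ≤ (2:ℝ) ^ (-((n:ℝ) * θ)) * S :=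
                mul_le_mul_of_nonneg_right hcres.le hSpos.le
            _ = r ^ n * S := by rw [hrn]
        · exact mul_nonneg (pow_nonneg hr0 n) (hSnonneg n v)
      linarith
    have hlim : Tendsto (fun n => pr (μ n) (fun x => ψ n x.2 ≠ x.1) + r ^ n)
        atTop (nhds 0) := by
      have := herr.add (tendsto_pow_atTop_nhds_zero_of_lt_one hr0 hr1)
      simpa using this
    exact squeeze_zero (fun n => pr_nonneg _ (h0 n) _) hbound hlim
  -- every element of the set is nonnegative
  have hlow : ∀ θ : ℝ,
      Tendsto (fun n => pr (μ n) (fun x => θ < f n x)) atTop (nhds 0) → 0 ≤ θ := by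
    intro θ hθ
    by_contra hneg
    push_neg at hneg
    have hall : ∀ n, pr (μ n) (fun x => θ < f n x) = 1 := by
      intro n
      unfold pr
      rw [← h1 n]
      apply Finset.sum_congr rfl
      intro x _
      rw [if_pos (lt_of_lt_of_le hneg (hfn n x))]
    have : Tendsto (fun _ : ℕ => (1:ℝ)) atTop (nhds 0) := by
      convert hθ using 1
      funext n
      rw [hall n]
    have := tendsto_nhds_unique this tendsto_const_nhds
    norm_num at this
  unfold pLimsup
  have hbdd : BddBelow {θ : ℝ | Tendsto (fun n => pr (μ n)
      (fun a => θ < f n a)) atTop (nhds 0)} := ⟨0, fun θ hθ => hlow θ hθ⟩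
  apply le_antisymm
  · apply le_of_forall_gt_imp_ge_of_dense
    intro θ hθ
    exact csInf_le hbdd (hmem θ hθ)
  · exact le_csInf ⟨1, hmem 1 one_pos⟩ fun θ hθ => hlow θ hθ
end

section
/- For a triplet of discrete random variables (X_0, X_1, X_2), the following two conditions are equivalent: (1) both Markov chains X_2 ↔ X_1 ↔ X_0 and X_1 ↔ X_2 ↔ X_0 hold; (2) there exist functions ξ_1, ξ_2 and a random variable B_0 independent of (X_1, X_2) such that ξ_1(X_1, B_0) = ξ_2(X_2, B_0) with probability 1, and letting X̂_0 := ξ_i(X_i, B_0) (which is the same for i = 1, 2), the joint distribution of (X̂_0, X_1, X_2) equals that of (X_0, X_1, X_2). -/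
open Finset in
lemma stmt11_marginal {ι X : Type*} [Fintype ι] [DecidableEq ι] [Fintype X] [DecidableEq X]
    (w : ι → X → ℝ) (hw : ∀ i, ∑ x, w i x = 1) (i0 : ι) (x0 : X) :
    ∑ b : ι → X, (if b i0 = x0 then ∏ i, w i (b i) else 0) = w i0 x0 := by
  have h : ∀ b : ι → X, (if b i0 = x0 then ∏ i, w i (b i) else 0)
      = ∏ i, (if i = i0 then (if b i = x0 then w i (b i) else 0) else w i (b i)) := by
    intro b
    by_cases hb : b i0 = x0
    · rw [if_pos hb]
      refine Finset.prod_congr rfl ?_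
      intro i _
      by_cases hi : i = i0
      · subst hi; simp [hb]
      · simp [hi]
    · rw [if_neg hb]
      symm
      apply Finset.prod_eq_zero (Finset.mem_univ i0)
      simp [hb]
  simp only [h]
  rw [← Fintype.prod_sum (f := fun (i : ι) (y : X) =>
      if i = i0 then (if y = x0 then w i y else 0) else w i y)]
  have h2 : ∀ i : ι, (∑ x, if i = i0 then (if x = x0 then w i x else 0) else w i x)
      = if i = i0 then w i0 x0 else 1 := by
    intro i
    by_cases hi : i = i0
    · subst hi; simp
    · simp [hi, hw i]
  simp only [h2]
  simp

open Finset in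
lemma stmt11_total {ι X : Type*} [Fintype ι] [DecidableEq ι] [Fintype X]
    (w : ι → X → ℝ) (hw : ∀ i, ∑ x, w i x = 1) :
    ∑ b : ι → X, ∏ i, w i (b i) = 1 := by
  rw [← Fintype.prod_sum (f := fun (i : ι) (y : X) => w i y)]
  simp [hw]

/-- From agreeing conditional distributions, construct shared randomness simulating them. -/
lemma stmt11_construct {X0 X1 X2 : Type} [Fintype X0] [Fintype X1] [Fintype X2]
    [DecidableEq X0]
    (P : X1 → X2 → ℝ) (w1 : X1 → X0 → ℝ) (w2 : X2 → X0 → ℝ)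
    (hw1 : ∀ x1, (∀ x0, 0 ≤ w1 x1 x0) ∧ ∑ x0, w1 x1 x0 = 1)
    (hw2 : ∀ x2, (∀ x0, 0 ≤ w2 x2 x0) ∧ ∑ x0, w2 x2 x0 = 1)
    (hagree : ∀ x1 x2, P x1 x2 ≠ 0 → w1 x1 = w2 x2) :
    ∃ (m : ℕ) (q : Fin m → ℝ) (ξ1 : X1 → Fin m → X0) (ξ2 : X2 → Fin m → X0),
      (∀ b, 0 ≤ q b) ∧ (∑ b, q b = 1) ∧
      (∀ x1 x2 b, P x1 x2 ≠ 0 → ξ1 x1 b = ξ2 x2 b) ∧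
      (∀ x0 x1, ∑ b, (if ξ1 x1 b = x0 then q b else 0) = w1 x1 x0) := by
  classical
  set I : Finset (X0 → ℝ) := Finset.image w1 Finset.univ ∪ Finset.image w2 Finset.univ with hI
  have hmem : ∀ f ∈ I, (∀ x0, 0 ≤ f x0) ∧ ∑ x0, f x0 = 1 := by
    intro f hf
    rcases Finset.mem_union.mp hf with h | h <;>
      obtain ⟨x, -, rfl⟩ := Finset.mem_image.mp h
    · exact hw1 x
    · exact hw2 x
  have J1 : ∀ x1, w1 x1 ∈ I :=
    fun x1 => Finset.mem_union_left _ (Finset.mem_image_of_mem w1 (Finset.mem_univ x1))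
  have J2 : ∀ x2, w2 x2 ∈ I :=
    fun x2 => Finset.mem_union_right _ (Finset.mem_image_of_mem w2 (Finset.mem_univ x2))
  set e := Fintype.equivFin ({f : X0 → ℝ // f ∈ I} → X0) with he
  refine ⟨Fintype.card ({f : X0 → ℝ // f ∈ I} → X0),
      fun j => ∏ i : {f : X0 → ℝ // f ∈ I}, i.val (e.symm j i),
      fun x1 j => e.symm j ⟨w1 x1, J1 x1⟩,
      fun x2 j => e.symm j ⟨w2 x2, J2 x2⟩, ?_, ?_, ?_, ?_⟩
  · intro j
    exact Finset.prod_nonneg fun i _ => (hmem i.1 i.2).1 _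
  · exact (Equiv.sum_comp e.symm (fun b => ∏ i : {f : X0 → ℝ // f ∈ I}, i.val (b i))).trans
      (stmt11_total _ fun i => (hmem i.1 i.2).2)
  · intro x1 x2 b hne
    exact congrArg (e.symm b) (Subtype.ext (hagree x1 x2 hne))
  · intro x0 x1
    exact (Equiv.sum_comp e.symm
        (fun b => if b ⟨w1 x1, J1 x1⟩ = x0 then ∏ i : {f : X0 → ℝ // f ∈ I}, i.val (b i) else 0)).trans
      (stmt11_marginal (fun i : {f : X0 → ℝ // f ∈ I} => i.val)
        (fun i => (hmem i.1 i.2).2) ⟨w1 x1, J1 x1⟩ x0)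

/-- Equivalence between the double Markov-chain condition
`X₂ ↔ X₁ ↔ X₀` and `X₁ ↔ X₂ ↔ X₀`, and the possibility of simulating the
common random variable `X₀` at both terminals from shared randomness `B₀`
independent of `(X₁, X₂)` via functions `ξ₁, ξ₂` that agree with probability 1
and reproduce the original joint distribution. -/
theorem stmt11 {X0 X1 X2 : Type} [Fintype X0] [Fintype X1] [Fintype X2]
    [DecidableEq X0]
    (p : X0 × X1 × X2 → ℝ)
    (h0 : ∀ x, 0 ≤ p x) (h1 : ∑ x, p x = 1) :
    ((∀ x0 x1 x2,
        p (x0, x1, x2) * (∑ q : X0 × X2, p (q.1, x1, q.2)) =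
          (∑ x2', p (x0, x1, x2')) * (∑ x0', p (x0', x1, x2))) ∧
     (∀ x0 x1 x2,
        p (x0, x1, x2) * (∑ q : X0 × X1, p (q.1, q.2, x2)) =
          (∑ x1', p (x0, x1', x2)) * (∑ x0', p (x0', x1, x2)))) ↔
    (∃ (m : ℕ) (q : Fin m → ℝ) (ξ1 : X1 → Fin m → X0) (ξ2 : X2 → Fin m → X0),
      (∀ b, 0 ≤ q b) ∧ (∑ b, q b = 1) ∧
      (∑ x1, ∑ x2, ∑ b,
        (if ξ1 x1 b ≠ ξ2 x2 b then (∑ x0, p (x0, x1, x2)) * q b else 0)) = 0 ∧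
      (∀ x0 x1 x2,
        p (x0, x1, x2) =
          ∑ b, if ξ1 x1 b = x0 then (∑ x0', p (x0', x1, x2)) * q b else 0)) := by
  classical
  set P : X1 → X2 → ℝ := fun x1 x2 => ∑ x0, p (x0, x1, x2) with hP
  have hP0 : ∀ x1 x2, 0 ≤ P x1 x2 := by
    intro x1 x2; simp only [hP]; exact Finset.sum_nonneg fun i _ => h0 _
  have hPe : ∀ x1 x2, (∑ x0, p (x0, x1, x2)) = P x1 x2 := by
    intro x1 x2; simp [hP]
  constructor
  · rintro ⟨hA, hB⟩
    have hne : Nonempty X0 := by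
      by_contra h
      rw [not_nonempty_iff] at h
      rw [Finset.univ_eq_empty, Finset.sum_empty] at h1
      exact one_ne_zero h1.symm
    obtain ⟨z0⟩ := hne
    have hsum1 : ∀ x1, (∑ q : X0 × X2, p (q.1, x1, q.2)) = ∑ x2, P x1 x2 := by
      intro x1; rw [Fintype.sum_prod_type]; simp only [hP]; exact Finset.sum_comm
    have hsum2 : ∀ x2, (∑ q : X0 × X1, p (q.1, q.2, x2)) = ∑ x1, P x1 x2 := by
      intro x2; rw [Fintype.sum_prod_type]; simp only [hP]; exact Finset.sum_comm
    have hPzero : ∀ x1 x2, P x1 x2 = 0 → ∀ x0, p (x0, x1, x2) = 0 := by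
      intro x1 x2 h x0
      simp only [hP] at h
      exact (Finset.sum_eq_zero_iff_of_nonneg fun i _ => h0 (i, x1, x2)).mp h x0
        (Finset.mem_univ x0)
    set w1 : X1 → X0 → ℝ := fun x1 x0 =>
      if (∑ x2, P x1 x2) = 0 then (if x0 = z0 then 1 else 0)
      else (∑ x2', p (x0, x1, x2')) / (∑ x2, P x1 x2) with hw1def
    set w2 : X2 → X0 → ℝ := fun x2 x0 =>
      if (∑ x1, P x1 x2) = 0 then (if x0 = z0 then 1 else 0)
      else (∑ x1', p (x0, x1', x2)) / (∑ x1, P x1 x2) with hw2def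
    have hmargsum1 : ∀ x1, ∑ x0, ∑ x2', p (x0, x1, x2') = ∑ x2, P x1 x2 := by
      intro x1; simp only [hP]; exact Finset.sum_comm
    have hmargsum2 : ∀ x2, ∑ x0, ∑ x1', p (x0, x1', x2) = ∑ x1, P x1 x2 := by
      intro x2; simp only [hP]; exact Finset.sum_comm
    have hw1 : ∀ x1, (∀ x0, 0 ≤ w1 x1 x0) ∧ ∑ x0, w1 x1 x0 = 1 := by
      intro x1
      by_cases h : (∑ x2, P x1 x2) = 0
      · constructor
        · intro x0; simp only [hw1def, if_pos h]; split <;> norm_num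
        · simp only [hw1def, if_pos h]; simp
      · constructor
        · intro x0
          simp only [hw1def, if_neg h]
          exact div_nonneg (Finset.sum_nonneg fun i _ => h0 _)
            (Finset.sum_nonneg fun i _ => hP0 x1 i)
        · simp only [hw1def, if_neg h]
          rw [← Finset.sum_div, hmargsum1 x1, div_self h]
    have hw2 : ∀ x2, (∀ x0, 0 ≤ w2 x2 x0) ∧ ∑ x0, w2 x2 x0 = 1 := by
      intro x2
      by_cases h : (∑ x1, P x1 x2) = 0
      · constructor
        · intro x0; simp only [hw2def, if_pos h]; split <;> norm_num
        · simp only [hw2def, if_pos h]; simp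
      · constructor
        · intro x0
          simp only [hw2def, if_neg h]
          exact div_nonneg (Finset.sum_nonneg fun i _ => h0 _)
            (Finset.sum_nonneg fun i _ => hP0 i x2)
        · simp only [hw2def, if_neg h]
          rw [← Finset.sum_div, hmargsum2 x2, div_self h]
    have key1 : ∀ x0 x1 x2, p (x0, x1, x2) = P x1 x2 * w1 x1 x0 := by
      intro x0 x1 x2
      by_cases h : (∑ x2', P x1 x2') = 0
      · have hP2 : P x1 x2 = 0 :=
          (Finset.sum_eq_zero_iff_of_nonneg fun i _ => hP0 x1 i).mp h x2 (Finset.mem_univ _)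
        rw [hPzero x1 x2 hP2 x0, hP2, zero_mul]
      · have e := hA x0 x1 x2
        rw [hsum1 x1, hPe x1 x2] at e
        have hw : w1 x1 x0 = (∑ x2', p (x0, x1, x2')) / (∑ x2', P x1 x2') := by
          simp only [hw1def]; rw [if_neg h]
        rw [hw]
        field_simp
        linear_combination e
    have key2 : ∀ x0 x1 x2, p (x0, x1, x2) = P x1 x2 * w2 x2 x0 := by
      intro x0 x1 x2
      by_cases h : (∑ x1', P x1' x2) = 0
      · have hP2 : P x1 x2 = 0 :=
          (Finset.sum_eq_zero_iff_of_nonneg fun i _ => hP0 i x2).mp h x1 (Finset.mem_univ _)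
        rw [hPzero x1 x2 hP2 x0, hP2, zero_mul]
      · have e := hB x0 x1 x2
        rw [hsum2 x2, hPe x1 x2] at e
        have hw : w2 x2 x0 = (∑ x1', p (x0, x1', x2)) / (∑ x1', P x1' x2) := by
          simp only [hw2def]; rw [if_neg h]
        rw [hw]
        field_simp
        linear_combination e
    have hagree : ∀ x1 x2, P x1 x2 ≠ 0 → w1 x1 = w2 x2 := by
      intro x1 x2 hne
      funext x0
      exact mul_left_cancel₀ hne ((key1 x0 x1 x2).symm.trans (key2 x0 x1 x2))
    obtain ⟨m, q, ξ1, ξ2, hq0, hq1, hagr, hmarg⟩ :=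
      stmt11_construct P w1 w2 hw1 hw2 hagree
    refine ⟨m, q, ξ1, ξ2, hq0, hq1, ?_, ?_⟩
    · refine Finset.sum_eq_zero fun x1 _ => Finset.sum_eq_zero fun x2 _ =>
        Finset.sum_eq_zero fun b _ => ?_
      rw [hPe x1 x2]
      by_cases hp : P x1 x2 = 0
      · rw [hp, zero_mul]; simp
      · rw [if_neg (not_not_intro (hagr x1 x2 b hp))]
    · intro x0 x1 x2
      calc p (x0, x1, x2) = P x1 x2 * w1 x1 x0 := key1 x0 x1 x2
        _ = P x1 x2 * ∑ b, (if ξ1 x1 b = x0 then q b else 0) := by rw [hmarg x0 x1]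
        _ = ∑ b, (if ξ1 x1 b = x0 then P x1 x2 * q b else 0) := by
            rw [Finset.mul_sum]
            exact Finset.sum_congr rfl fun b _ => by split <;> simp
        _ = ∑ b, (if ξ1 x1 b = x0 then (∑ x0', p (x0', x1, x2)) * q b else 0) := by
            rw [hPe x1 x2]
  · rintro ⟨m, q, ξ1, ξ2, hq0, hq1, hag, hrep⟩
    set r1 : X1 → X0 → ℝ := fun x1 x0 => ∑ j, if ξ1 x1 j = x0 then q j else 0 with hr1
    set r2 : X2 → X0 → ℝ := fun x2 x0 => ∑ j, if ξ2 x2 j = x0 then q j else 0 with hr2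
    have hrep1 : ∀ x0 x1 x2, p (x0, x1, x2) = P x1 x2 * r1 x1 x0 := by
      intro x0 x1 x2
      rw [hrep x0 x1 x2]
      simp only [hP, hr1]
      rw [Finset.mul_sum]
      exact Finset.sum_congr rfl fun j _ => by split_ifs <;> simp
    have hterm : ∀ (x1 : X1) (x2 : X2) (j : Fin m),
        0 ≤ (if ξ1 x1 j ≠ ξ2 x2 j then (∑ x0, p (x0, x1, x2)) * q j else 0) := by
      intro x1 x2 j
      split
      · exact mul_nonneg (Finset.sum_nonneg fun i _ => h0 _) (hq0 j)
      · exact le_refl 0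
    have hzero : ∀ x1 x2 j, ξ1 x1 j ≠ ξ2 x2 j → P x1 x2 * q j = 0 := by
      intro x1 x2 j hne
      have e1 := (Finset.sum_eq_zero_iff_of_nonneg (fun a _ =>
        Finset.sum_nonneg fun b _ => Finset.sum_nonneg fun c _ => hterm a b c)).mp hag x1
        (Finset.mem_univ x1)
      have e2 := (Finset.sum_eq_zero_iff_of_nonneg (fun b _ =>
        Finset.sum_nonneg fun c _ => hterm x1 b c)).mp e1 x2 (Finset.mem_univ x2)
      have e3 := (Finset.sum_eq_zero_iff_of_nonneg (fun c _ => hterm x1 x2 c)).mp e2 j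
        (Finset.mem_univ j)
      rw [if_pos hne] at e3
      simp only [hP]
      exact e3
    have hrep2 : ∀ x0 x1 x2, p (x0, x1, x2) = P x1 x2 * r2 x2 x0 := by
      intro x0 x1 x2
      rw [hrep1 x0 x1 x2]
      simp only [hr1, hr2]
      rw [Finset.mul_sum, Finset.mul_sum]
      refine Finset.sum_congr rfl fun j _ => ?_
      by_cases hc : ξ1 x1 j = ξ2 x2 j
      · rw [hc]
      · have h0' := hzero x1 x2 j hc
        split_ifs <;> simp [h0']
    constructor
    · intro x0 x1 x2
      simp only [Fintype.sum_prod_type]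
      simp only [hrep1]
      simp only [← Finset.sum_mul, ← Finset.mul_sum]
      ring
    · intro x0 x1 x2
      simp only [Fintype.sum_prod_type]
      simp only [hrep2]
      simp only [← Finset.sum_mul, ← Finset.mul_sum]
      ring
end

section
/- Let (U, V) be a pair of random variables on finite sets with joint distribution μ_{UV}. Consider the stochastic decision rule that, upon observing V = v, outputs Û drawn from the posterior μ_{U|V}(·|v); i.e., the joint distribution of (U, V, Û) is μ_{UV}(u,v)·μ_{U|V}(û|v). Then for any (possibly stochastic) decision rule given by a conditional distribution μ_{Ǔ|V}, the error probability of the posterior-sampling rule is at most twice that of the other rule: Σ_{u,v,û : û≠u} μ_{UV}(u,v) μ_{U|V}(û|v) ≤ 2 Σ_{u,v,ǔ : ǔ≠u} μ_{UV}(u,v) μ_{Ǔ|V}(ǔ|v). -/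
lemma sum_ne_eq {U : Type} [Fintype U] [DecidableEq U] (f : U → ℝ) (u : U) :
    (∑ x, if x ≠ u then f x else 0) = (∑ x, f x) - f u := by
  have h : (∑ x, if x ≠ u then f x else 0) = ∑ x, (f x - if x = u then f x else 0) := by
    apply Finset.sum_congr rfl
    intro x _
    by_cases h : x = u <;> simp [h]
  rw [h, Finset.sum_sub_distrib, Finset.sum_ite_eq' Finset.univ u f]
  simp

lemma key {U : Type} [Fintype U] [DecidableEq U] (p : U → ℝ) (hp : ∀ u, 0 ≤ p u)
    (ν : U → ℝ) (hν0 : ∀ u, 0 ≤ ν u) (hν1 : ∑ u, ν u = 1) :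
    (∑ u, ∑ uh, if uh ≠ u then p u * (p uh / ∑ u', p u') else 0) ≤
      2 * ∑ u, ∑ uc, if uc ≠ u then p u * ν uc else 0 := by
  set s := ∑ u', p u' with hs
  clear_value s
  have hs0 : 0 ≤ s := by rw [hs]; exact Finset.sum_nonneg fun u _ => hp u
  have hR : (0:ℝ) ≤ ∑ u, ∑ uc, if uc ≠ u then p u * ν uc else 0 := by
    apply Finset.sum_nonneg; intro u _; apply Finset.sum_nonneg; intro uc _
    by_cases h : uc ≠ u
    · rw [if_pos h]; exact mul_nonneg (hp u) (hν0 uc)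
    · rw [if_neg h]
  by_cases hz : s = 0
  · have hz' : ∑ u', p u' = 0 := by rw [← hs]; exact hz
    have hall : ∀ u, p u = 0 := fun u =>
      (Finset.sum_eq_zero_iff_of_nonneg (fun u _ => hp u)).mp hz' u (Finset.mem_univ u)
    have hL : (∑ u, ∑ uh, if uh ≠ u then p u * (p uh / s) else 0) = 0 := by
      apply Finset.sum_eq_zero; intro u _; apply Finset.sum_eq_zero; intro uh _
      by_cases h : uh ≠ u <;> simp [h, hall u]
    rw [hL]; linarith
  have hspos : 0 < s := lt_of_le_of_ne hs0 (Ne.symm hz)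
  have e1 : (∑ u, ∑ uh, if uh ≠ u then p u * (p uh / s) else 0)
      = (s * s - ∑ u, p u * p u) / s := by
    have h : ∀ u, (∑ uh, if uh ≠ u then p u * (p uh / s) else 0)
        = (p u * s - p u * p u) / s := by
      intro u
      rw [sum_ne_eq (fun uh => p u * (p uh / s)) u]
      have h2 : (∑ x, p u * (p x / s)) = p u * (s / s) := by
        rw [← Finset.mul_sum, ← Finset.sum_div, ← hs]
      rw [h2]
      field_simp
    rw [Finset.sum_congr rfl (fun u _ => h u), ← Finset.sum_div, Finset.sum_sub_distrib,
      ← Finset.sum_mul, ← hs]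
  have e2 : (∑ u, ∑ uc, if uc ≠ u then p u * ν uc else 0) = s - ∑ u, p u * ν u := by
    have h : ∀ u, (∑ uc, if uc ≠ u then p u * ν uc else 0) = p u - p u * ν u := by
      intro u
      rw [sum_ne_eq (fun uc => p u * ν uc) u, ← Finset.mul_sum, hν1, mul_one]
    rw [Finset.sum_congr rfl (fun u _ => h u), Finset.sum_sub_distrib, ← hs]
  rw [e1, e2]
  have hν1' : ∀ u, ν u ≤ 1 := by
    intro u
    rw [← hν1]
    exact Finset.single_le_sum (fun i _ => hν0 i) (Finset.mem_univ u)
  have hkey : ∑ u, ν u * (2 * s * p u) ≤ ∑ u, (ν u * (s * s) + p u * p u) := by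
    apply Finset.sum_le_sum
    intro u _
    nlinarith [sq_nonneg (s - p u), hν0 u, hν1' u, hp u, sq_nonneg (p u)]
  have hA : ∑ u, ν u * (2 * s * p u) = 2 * s * ∑ u, p u * ν u := by
    rw [Finset.mul_sum]; apply Finset.sum_congr rfl; intro u _; ring
  have hB : ∑ u, (ν u * (s * s) + p u * p u) = s * s + ∑ u, p u * p u := by
    rw [Finset.sum_add_distrib, ← Finset.sum_mul, hν1, one_mul]
  rw [hA, hB] at hkey
  rw [div_le_iff₀ hspos]
  nlinarith [hkey]

/-- Stochastic decision with the posterior distribution: the error probability of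
the posterior-sampling decision rule is at most twice that of any (possibly
stochastic) decision rule. -/
theorem stmt14 {U V : Type} [Fintype U] [Fintype V] [DecidableEq U]
    (μ : U × V → ℝ)
    (h0 : ∀ x, 0 ≤ μ x) (h1 : ∑ x, μ x = 1)
    (ν : V → U → ℝ)
    (hν0 : ∀ v u, 0 ≤ ν v u) (hν1 : ∀ v, ∑ u, ν v u = 1) :
    (∑ u, ∑ v, ∑ uh, if uh ≠ u then
        μ (u, v) * (μ (uh, v) / ∑ u', μ (u', v)) else 0) ≤
      2 * ∑ u, ∑ v, ∑ uc, if uc ≠ u then μ (u, v) * ν v uc else 0 := by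
  rw [Finset.sum_comm (s := Finset.univ) (t := Finset.univ)]
  rw [Finset.sum_comm (s := Finset.univ) (t := Finset.univ)
    (f := fun u v => ∑ uc, if uc ≠ u then μ (u, v) * ν v uc else 0), Finset.mul_sum]
  apply Finset.sum_le_sum
  intro v _
  exact key (fun u => μ (u, v)) (fun u => h0 (u, v)) (ν v) (hν0 v) (hν1 v)
end
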